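/- Let a < b be real numbers and let u, v : ℝ → ℝ be continuously differentiable functions whose supports are contained in [a, b]. Then ‖ u·|u′| − v·|v′| ‖_{L²(ℝ)} ≤ (b − a)^{1/2} ( ‖u′‖_{L²(ℝ)} + ‖v′‖_{L²(ℝ)} ) ‖ u′ − v′ ‖_{L²(ℝ)}. -/

import Mathlib

open MeasureTheory Set

/-- Cauchy–Schwarz for integrals of real functions. -/
lemma cs_aux {μ : Measure ℝ} {f g : ℝ → ℝ} (hf : MemLp f 2 μ) (hg : MemLp g 2 μ) :
    ∫ x, |f x| * |g x| ∂μ ≤ Real.sqrt (∫ x, f x ^ 2 ∂μ) * Real.sqrt (∫ x, g x ^ 2 ∂μ) := by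
  have h22 : Real.HolderConjugate 2 2 := Real.holderConjugate_iff.2 ⟨one_lt_two, by norm_num⟩
  have hf2 : MemLp (fun x => |f x|) (ENNReal.ofReal 2) μ := by
    simpa [Real.norm_eq_abs, ENNReal.ofReal_ofNat] using hf.norm
  have hg2 : MemLp (fun x => |g x|) (ENNReal.ofReal 2) μ := by
    simpa [Real.norm_eq_abs, ENNReal.ofReal_ofNat] using hg.norm
  have key := integral_mul_le_Lp_mul_Lq_of_nonneg h22
    (Filter.Eventually.of_forall fun x => abs_nonneg (f x))
    (Filter.Eventually.of_forall fun x => abs_nonneg (g x)) hf2 hg2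
  have hfr : ∀ x, |f x| ^ (2 : ℝ) = f x ^ 2 := fun x => by
    rw [show (2 : ℝ) = ((2 : ℕ) : ℝ) by norm_num, Real.rpow_natCast, sq_abs]
  have hgr : ∀ x, |g x| ^ (2 : ℝ) = g x ^ 2 := fun x => by
    rw [show (2 : ℝ) = ((2 : ℕ) : ℝ) by norm_num, Real.rpow_natCast, sq_abs]
  simp only [hfr, hgr] at key
  rw [Real.sqrt_eq_rpow, Real.sqrt_eq_rpow]
  exact key

/-- Sup-norm bound for `C¹` functions supported in `[a,b]`. -/
lemma sup_aux (a b : ℝ) (hab : a < b) (u : ℝ → ℝ) (hu : ContDiff ℝ 1 u)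
    (hsu : Function.support u ⊆ Icc a b) (x : ℝ) :
    |u x| ≤ Real.sqrt (b - a) * Real.sqrt (∫ t, deriv u t ^ 2) := by
  have hU : (0:ℝ) ≤ ∫ t, deriv u t ^ 2 := integral_nonneg fun t => sq_nonneg _
  have hrhs : (0:ℝ) ≤ Real.sqrt (b - a) * Real.sqrt (∫ t, deriv u t ^ 2) :=
    mul_nonneg (Real.sqrt_nonneg _) (Real.sqrt_nonneg _)
  by_cases hx : x ∈ Icc a b
  · -- u a = 0
    have hcont : Continuous u := hu.continuous
    have hua : u a = 0 := by
      have h1 : Filter.Tendsto u (nhdsWithin a (Iio a)) (nhds (u a)) :=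
        (hcont.tendsto a).mono_left nhdsWithin_le_nhds
      have h2 : Filter.Tendsto u (nhdsWithin a (Iio a)) (nhds 0) := by
        apply Filter.Tendsto.congr' _ tendsto_const_nhds
        filter_upwards [self_mem_nhdsWithin] with y hy
        by_contra h
        exact absurd ((hsu (Function.mem_support.2 fun h' => h h'.symm)).1) (not_le.2 hy)
      exact tendsto_nhds_unique h1 h2
    have hderiv : Continuous (deriv u) := hu.continuous_deriv le_rfl
    have hftc : ∫ t in a..x, deriv u t = u x - u a :=
      intervalIntegral.integral_deriv_eq_sub
        (fun t _ => (hu.differentiable one_ne_zero).differentiableAt)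
        (hderiv.intervalIntegrable a x)
    have hax : a ≤ x := hx.1
    have hIoc : ∫ t in a..x, deriv u t = ∫ t in Ioc a x, deriv u t := by
      rw [intervalIntegral.integral_of_le hax]
    haveI : IsFiniteMeasure (volume.restrict (Ioc a x)) := by
      constructor
      rw [Measure.restrict_apply_univ, Real.volume_Ioc]
      exact ENNReal.ofReal_lt_top
    have hmem : MemLp (deriv u) 2 (volume.restrict (Ioc a x)) := by
      have hcs : HasCompactSupport u :=
        HasCompactSupport.intro isCompact_Icc fun y hy =>
          Function.notMem_support.1 fun h => hy (hsu h)
      exact ((hderiv.memLp_of_hasCompactSupport (μ := volume) hcs.deriv)).restrict _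
    have hone : MemLp (fun _ : ℝ => (1:ℝ)) 2 (volume.restrict (Ioc a x)) := memLp_const 1
    have hcs2 := cs_aux hone hmem
    have hb1 : |u x| ≤ ∫ t in Ioc a x, |deriv u t| := by
      have heq : u x = ∫ t in Ioc a x, deriv u t := by
        rw [← hIoc, hftc, hua, sub_zero]
      calc |u x| = ‖∫ t in Ioc a x, deriv u t‖ := by rw [heq, Real.norm_eq_abs]
        _ ≤ ∫ t in Ioc a x, ‖deriv u t‖ := norm_integral_le_integral_norm _
        _ = ∫ t in Ioc a x, |deriv u t| := by simp only [Real.norm_eq_abs]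
    have hb2 : ∫ t in Ioc a x, |(1:ℝ)| * |deriv u t|
        ≤ Real.sqrt (∫ t in Ioc a x, (1:ℝ) ^ 2) * Real.sqrt (∫ t in Ioc a x, deriv u t ^ 2) :=
      hcs2
    have hvol : ∫ t in Ioc a x, (1:ℝ) ^ 2 = x - a := by
      simp [Real.volume_Ioc, ENNReal.toReal_ofReal (sub_nonneg.2 hax), hax]
    have hle1 : Real.sqrt (∫ t in Ioc a x, (1:ℝ) ^ 2) ≤ Real.sqrt (b - a) := by
      rw [hvol]; exact Real.sqrt_le_sqrt (by linarith [hx.2])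
    have hzu : ∀ y, y ∉ Icc a b → deriv u y = 0 := fun y hy => by
      by_contra h
      exact hy (closure_minimal hsu isClosed_Icc
        (support_deriv_subset (Function.mem_support.2 h)))
    have hintsq : Integrable (fun t => deriv u t ^ 2) :=
      (hderiv.pow 2).integrable_of_hasCompactSupport
        (HasCompactSupport.intro (isCompact_Icc : IsCompact (Icc a b)) fun y hy => by simp [hzu y hy])
    have hle2 : Real.sqrt (∫ t in Ioc a x, deriv u t ^ 2) ≤ Real.sqrt (∫ t, deriv u t ^ 2) :=
      Real.sqrt_le_sqrt (setIntegral_le_integral hintsq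
        (Filter.Eventually.of_forall fun t => sq_nonneg _))
    calc |u x| ≤ ∫ t in Ioc a x, |deriv u t| := hb1
      _ = ∫ t in Ioc a x, |(1:ℝ)| * |deriv u t| := by simp
      _ ≤ Real.sqrt (∫ t in Ioc a x, (1:ℝ) ^ 2) * Real.sqrt (∫ t in Ioc a x, deriv u t ^ 2) := hb2
      _ ≤ Real.sqrt (b - a) * Real.sqrt (∫ t, deriv u t ^ 2) :=
          mul_le_mul hle1 hle2 (Real.sqrt_nonneg _) (Real.sqrt_nonneg _)
  · have : u x = 0 := Function.notMem_support.1 fun h => hx (hsu h)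
    rw [this, abs_zero]; exact hrhs

/-- The computation of Example 7.3 (nonlinearity of gradient type, `d = 1`): for
continuously differentiable `u, v` supported in `[a,b]`,
`‖u|u′| − v|v′|‖_{L²(ℝ)} ≤ (b−a)^{1/2}(‖u′‖_{L²} + ‖v′‖_{L²})‖u′ − v′‖_{L²}`. -/
theorem stmt_8
    (a b : ℝ) (hab : a < b) (u v : ℝ → ℝ)
    (hu : ContDiff ℝ 1 u) (hv : ContDiff ℝ 1 v)
    (hsu : Function.support u ⊆ Icc a b) (hsv : Function.support v ⊆ Icc a b) :
    Real.sqrt (∫ x, (u x * |deriv u x| - v x * |deriv v x|) ^ 2)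
      ≤ Real.sqrt (b - a)
        * (Real.sqrt (∫ x, deriv u x ^ 2) + Real.sqrt (∫ x, deriv v x ^ 2))
        * Real.sqrt (∫ x, (deriv u x - deriv v x) ^ 2) := by
  -- notation
  set S := Real.sqrt (b - a) with hS
  set U := Real.sqrt (∫ x, deriv u x ^ 2) with hUdef
  set V := Real.sqrt (∫ x, deriv v x ^ 2) with hVdef
  set D := Real.sqrt (∫ x, (deriv u x - deriv v x) ^ 2) with hDdef
  have hS0 : 0 ≤ S := Real.sqrt_nonneg _
  have hU0 : 0 ≤ U := Real.sqrt_nonneg _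
  have hV0 : 0 ≤ V := Real.sqrt_nonneg _
  have hD0 : 0 ≤ D := Real.sqrt_nonneg _
  -- continuity & compact support facts
  have hcu : Continuous u := hu.continuous
  have hcv : Continuous v := hv.continuous
  have hdu : Continuous (deriv u) := hu.continuous_deriv le_rfl
  have hdv : Continuous (deriv v) := hv.continuous_deriv le_rfl
  have hcsu : HasCompactSupport u :=
    HasCompactSupport.intro isCompact_Icc fun y hy =>
      Function.notMem_support.1 fun h => hy (hsu h)
  have hcsv : HasCompactSupport v :=
    HasCompactSupport.intro isCompact_Icc fun y hy =>
      Function.notMem_support.1 fun h => hy (hsv h)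
  have hUsq : U ^ 2 = ∫ x, deriv u x ^ 2 :=
    Real.sq_sqrt (integral_nonneg fun x => sq_nonneg _)
  have hVsq : V ^ 2 = ∫ x, deriv v x ^ 2 :=
    Real.sq_sqrt (integral_nonneg fun x => sq_nonneg _)
  have hDsq : D ^ 2 = ∫ x, (deriv u x - deriv v x) ^ 2 :=
    Real.sq_sqrt (integral_nonneg fun x => sq_nonneg _)
  -- deriv of u - v
  have hderivsub : ∀ x, deriv (fun y => u y - v y) x = deriv u x - deriv v x := fun x =>
    deriv_sub (hu.differentiable one_ne_zero).differentiableAt (hv.differentiable one_ne_zero).differentiableAt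
  -- sup bounds
  have hbu : ∀ x, |u x| ≤ S * U := sup_aux a b hab u hu hsu
  have hbuv : ∀ x, |u x - v x| ≤ S * D := by
    intro x
    have h1 := sup_aux a b hab (fun y => u y - v y) (hu.sub hv)
      (fun y hy => by
        by_contra h
        have : u y - v y = 0 := by
          have h1 : u y = 0 := Function.notMem_support.1 fun h' => h (hsu h')
          have h2 : v y = 0 := Function.notMem_support.1 fun h' => h (hsv h')
          rw [h1, h2, sub_zero]
        exact hy this) x
    simpa only [hderivsub] using h1
  -- pointwise bound
  have hpt : ∀ x, (u x * |deriv u x| - v x * |deriv v x|) ^ 2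
      ≤ (S * U) ^ 2 * (deriv u x - deriv v x) ^ 2
        + 2 * ((S * U) * (S * D)) * (abs (deriv u x - deriv v x) * abs (deriv v x))
        + (S * D) ^ 2 * deriv v x ^ 2 := by
    intro x
    have hdecomp : u x * abs (deriv u x) - v x * abs (deriv v x)
        = u x * (abs (deriv u x) - abs (deriv v x)) + (u x - v x) * abs (deriv v x) := by ring
    have habsle : abs (u x * abs (deriv u x) - v x * abs (deriv v x))
        ≤ S * U * abs (deriv u x - deriv v x) + S * D * abs (deriv v x) := by
      rw [hdecomp]
      calc abs (u x * (abs (deriv u x) - abs (deriv v x)) + (u x - v x) * abs (deriv v x))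
          ≤ abs (u x * (abs (deriv u x) - abs (deriv v x)))
            + abs ((u x - v x) * abs (deriv v x)) := abs_add_le _ _
        _ = abs (u x) * abs (abs (deriv u x) - abs (deriv v x))
            + abs (u x - v x) * abs (abs (deriv v x)) := by rw [abs_mul, abs_mul]
        _ ≤ (S * U) * abs (deriv u x - deriv v x) + (S * D) * abs (deriv v x) := by
            rw [abs_abs]
            exact add_le_add
              (mul_le_mul (hbu x) (abs_abs_sub_abs_le_abs_sub _ _) (abs_nonneg _)
                (mul_nonneg hS0 hU0))
              (mul_le_mul_of_nonneg_right (hbuv x) (abs_nonneg _))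
    have h2 : (u x * abs (deriv u x) - v x * abs (deriv v x)) ^ 2
        ≤ (S * U * abs (deriv u x - deriv v x) + S * D * abs (deriv v x)) ^ 2 := by
      rw [← sq_abs]
      exact pow_le_pow_left₀ (abs_nonneg _) habsle 2
    nlinarith [h2, sq_abs (deriv u x - deriv v x), sq_abs (deriv v x)]
  -- vanishing of derivatives outside [a,b]
  have hzu : ∀ y, y ∉ Icc a b → deriv u y = 0 := fun y hy => by
    by_contra h
    exact hy (closure_minimal hsu isClosed_Icc
      (support_deriv_subset (Function.mem_support.2 h)))
  have hzv : ∀ y, y ∉ Icc a b → deriv v y = 0 := fun y hy => by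
    by_contra h
    exact hy (closure_minimal hsv isClosed_Icc
      (support_deriv_subset (Function.mem_support.2 h)))
  have hzu' : ∀ y, y ∉ Icc a b → u y = 0 := fun y hy =>
    Function.notMem_support.1 fun h => hy (hsu h)
  have hzv' : ∀ y, y ∉ Icc a b → v y = 0 := fun y hy =>
    Function.notMem_support.1 fun h => hy (hsv h)
  -- integrability
  have hintf : Integrable (fun x => (u x * |deriv u x| - v x * |deriv v x|) ^ 2) := by
    have hc : Continuous fun x => (u x * |deriv u x| - v x * |deriv v x|) ^ 2 := by fun_prop
    apply hc.integrable_of_hasCompactSupport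
    exact HasCompactSupport.intro (isCompact_Icc : IsCompact (Icc a b)) fun y hy => by
      simp [hzu' y hy, hzv' y hy]
  have hint1 : Integrable (fun x => (deriv u x - deriv v x) ^ 2) := by
    have hc : Continuous fun x => (deriv u x - deriv v x) ^ 2 := by fun_prop
    apply hc.integrable_of_hasCompactSupport
    exact HasCompactSupport.intro (isCompact_Icc : IsCompact (Icc a b)) fun y hy => by
      simp [hzu y hy, hzv y hy]
  have hint2 : Integrable (fun x => |deriv u x - deriv v x| * |deriv v x|) := by
    have hc : Continuous fun x => |deriv u x - deriv v x| * |deriv v x| := by fun_prop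
    apply hc.integrable_of_hasCompactSupport
    exact HasCompactSupport.intro (isCompact_Icc : IsCompact (Icc a b)) fun y hy => by
      simp [hzu y hy, hzv y hy]
  have hint3 : Integrable (fun x => deriv v x ^ 2) := by
    have hc : Continuous fun x => deriv v x ^ 2 := by fun_prop
    apply hc.integrable_of_hasCompactSupport
    exact HasCompactSupport.intro (isCompact_Icc : IsCompact (Icc a b)) fun y hy => by
      simp [hzv y hy]
  -- Cauchy Schwarz for the cross term
  have hKpq : HasCompactSupport (fun x => deriv u x - deriv v x) :=
    HasCompactSupport.intro (isCompact_Icc : IsCompact (Icc a b)) fun y hy => by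
      simp [hzu y hy, hzv y hy]
  have hKq : HasCompactSupport (deriv v) :=
    HasCompactSupport.intro (isCompact_Icc : IsCompact (Icc a b)) fun y hy => by
      simp [hzv y hy]
  have hmemp : MemLp (fun x => deriv u x - deriv v x) 2 (volume : Measure ℝ) :=
    (hdu.sub hdv).memLp_of_hasCompactSupport hKpq
  have hmemq : MemLp (deriv v) 2 (volume : Measure ℝ) :=
    hdv.memLp_of_hasCompactSupport hKq
  have hcross : ∫ x, |deriv u x - deriv v x| * |deriv v x| ≤ D * V := by
    have := cs_aux hmemp hmemq
    rwa [← hDdef, ← hVdef] at this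
  -- integrate the pointwise bound
  have hintineq : ∫ x, (u x * |deriv u x| - v x * |deriv v x|) ^ 2
      ≤ (S * U) ^ 2 * D ^ 2 + 2 * ((S * U) * (S * D)) * (D * V) + (S * D) ^ 2 * V ^ 2 := by
    have hrhsint : Integrable (fun x => (S * U) ^ 2 * (deriv u x - deriv v x) ^ 2
        + 2 * ((S * U) * (S * D)) * (abs (deriv u x - deriv v x) * abs (deriv v x))
        + (S * D) ^ 2 * deriv v x ^ 2) :=
      ((hint1.const_mul _).add (hint2.const_mul _)).add (hint3.const_mul _)
    calc ∫ x, (u x * |deriv u x| - v x * |deriv v x|) ^ 2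
        ≤ ∫ x, ((S * U) ^ 2 * (deriv u x - deriv v x) ^ 2
            + 2 * ((S * U) * (S * D)) * (abs (deriv u x - deriv v x) * abs (deriv v x))
            + (S * D) ^ 2 * deriv v x ^ 2) := integral_mono hintf hrhsint hpt
      _ = (S * U) ^ 2 * (∫ x, (deriv u x - deriv v x) ^ 2)
            + 2 * ((S * U) * (S * D)) * (∫ x, |deriv u x - deriv v x| * |deriv v x|)
            + (S * D) ^ 2 * (∫ x, deriv v x ^ 2) := by
          have hB : Integrable (fun x => (S * U) ^ 2 * (deriv u x - deriv v x) ^ 2) :=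
            hint1.const_mul _
          have hC : Integrable (fun x =>
              2 * ((S * U) * (S * D)) * (abs (deriv u x - deriv v x) * abs (deriv v x))) :=
            hint2.const_mul _
          have hD2 : Integrable (fun x => (S * D) ^ 2 * deriv v x ^ 2) :=
            hint3.const_mul _
          have hBC : Integrable (fun x => (S * U) ^ 2 * (deriv u x - deriv v x) ^ 2
              + 2 * ((S * U) * (S * D)) * (abs (deriv u x - deriv v x) * abs (deriv v x))) :=
            hB.add hC
          rw [integral_add hBC hD2, integral_add hB hC,
            integral_const_mul, integral_const_mul, integral_const_mul]
      _ ≤ (S * U) ^ 2 * D ^ 2 + 2 * ((S * U) * (S * D)) * (D * V) + (S * D) ^ 2 * V ^ 2 := by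
          rw [hDsq, hVsq]
          have h2c : (0:ℝ) ≤ 2 * ((S * U) * (S * D)) := by positivity
          exact add_le_add_left
            (add_le_add_right (mul_le_mul_of_nonneg_left hcross h2c) _) _
  -- finish
  have hfinal : ∫ x, (u x * |deriv u x| - v x * |deriv v x|) ^ 2 ≤ (S * (U + V) * D) ^ 2 := by
    nlinarith [hintineq, mul_nonneg hS0 hD0, mul_nonneg hU0 hV0]
  calc Real.sqrt (∫ x, (u x * |deriv u x| - v x * |deriv v x|) ^ 2)
      ≤ Real.sqrt ((S * (U + V) * D) ^ 2) := Real.sqrt_le_sqrt hfinal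
    _ = S * (U + V) * D := Real.sqrt_sq (by positivity)
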